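/- For any $R$-module $M$ and nonempty $T \subseteq Spec(M)$, the clique number of the Zariski topology-graph satisfies: $\omega(G(\tau_T)) = 2$ if and only if $\chi(G(\tau_T)) = 2$. Equivalently, $G(\tau_T)$ is bipartite if and only if $G(\tau_T)$ is triangle-free. -/

import Mathlib

open Submodule

section Defs
variable (R : Type*) [CommRing R] {M : Type*} [AddCommGroup M] [Module R M]

/-- `(N : M)`, the colon ideal of a submodule with the whole module. -/
def colonTop (N : Submodule R M) : Ideal R := N.colon ⊤

variable {R}

/-- A prime submodule. -/
def IsPrimeSubmodule (P : Submodule R M) : Prop :=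
  P ≠ ⊤ ∧ ∀ (r : R) (m : M), r • m ∈ P → r ∈ colonTop R P ∨ m ∈ P

/-- The prime spectrum of a module, as a set of submodules. -/
def specSet (R : Type*) [CommRing R] (M : Type*) [AddCommGroup M] [Module R M] :
    Set (Submodule R M) := {P | IsPrimeSubmodule P}

/-- `V(N)`. -/
def Vset (N : Submodule R M) : Set (Submodule R M) :=
  {P | IsPrimeSubmodule P ∧ colonTop R N ≤ colonTop R P}

/-- `V^*(N)`. -/
def VstarSet (N : Submodule R M) : Set (Submodule R M) :=
  {P | IsPrimeSubmodule P ∧ N ≤ P}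

/-- The product `NK = (N:M)(K:M)M` of two submodules. -/
def prodSub (N K : Submodule R M) : Submodule R M :=
  (colonTop R N * colonTop R K) • (⊤ : Submodule R M)

/-- The prime radical of a submodule. -/
def radicalSub (N : Submodule R M) : Submodule R M :=
  sInf {P | IsPrimeSubmodule P ∧ N ≤ P}

/-- Adjacency in the Zariski topology-graph `G(τ_T)`. -/
def ZAdj (T : Set (Submodule R M)) (N L : Submodule R M) : Prop :=
  N ≠ L ∧ N ≠ ⊤ ∧ L ≠ ⊤ ∧ Vset N ∪ Vset L = T ∧ Vset N ≠ T ∧ Vset L ≠ T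

/-- Vertices of the Zariski topology-graph `G(τ_T)`. -/
def ZVertex (T : Set (Submodule R M)) (N : Submodule R M) : Prop :=
  ∃ K, ZAdj T N K

/-- The Zariski topology-graph `G(τ_T)` as a simple graph on its vertex set. -/
def ZGraph (T : Set (Submodule R M)) : SimpleGraph {N : Submodule R M // ZVertex T N} where
  Adj a b := ZAdj T a.1 b.1
  symm := ⟨by
    rintro a b ⟨h1, h2, h3, h4, h5, h6⟩
    exact ⟨h1.symm, h3, h2, by rwa [Set.union_comm], h6, h5⟩⟩
  loopless := ⟨by rintro a ⟨h1, -⟩; exact h1 rfl⟩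

end Defs
section Extra
variable {R : Type*} [CommRing R] {M : Type*} [AddCommGroup M] [Module R M]

/-- Prime submodule of a submodule `W`, internal version (i.e. a prime submodule of the
module `W`). -/
def IsPrimeIn (W P : Submodule R M) : Prop :=
  P < W ∧ ∀ (r : R) (m : M), m ∈ W → r • m ∈ P → (∀ x ∈ W, r • x ∈ P) ∨ m ∈ P

/-- The prime radical of `N` computed inside the submodule `W`. -/
def radicalIn (W N : Submodule R M) : Submodule R M :=
  sInf {P | IsPrimeIn W P ∧ N ≤ P} ⊓ W

/-- Vertices of the graph `AG(M)^*`. -/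
def AGstarVertex (N : Submodule R M) : Prop :=
  N ≠ ⊤ ∧ colonTop R N ≠ Module.annihilator R M ∧
    ∃ K, K ≠ ⊤ ∧ colonTop R K ≠ Module.annihilator R M ∧ prodSub N K = ⊥

/-- Adjacency in the graph `AG(M)^*`. -/
def AGstarAdj (N L : Submodule R M) : Prop :=
  N ≠ L ∧ AGstarVertex N ∧ AGstarVertex L ∧ prodSub N L = ⊥

/-- The clique number of a graph, valued in `ℕ∞`. -/
noncomputable def cliqueNumE {V : Type*} (G : SimpleGraph V) : ℕ∞ :=
  ⨆ n ∈ {n : ℕ | ∃ s, G.IsNClique n s}, (n : ℕ∞)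

end Extra

/-!
Because `V(NK) = V(N) ∪ V(K)`, the sets `V(N)` can be enlarged inside `T` at will by taking
products, which manufactures new vertices. Fix an edge `A — B` and colour a vertex `N` by whether
`V(N) ∪ V(B) = T`. Two adjacent vertices `S, S'` of the first colour form a triangle with `B`.
If both have the second colour, then `A, S', SB` form a triangle when `V(S') ∪ V(A) = T`, and
`SB, S'B, S'A` do otherwise. So a triangle-free `G(τ_T)` is bipartite, and for a graph with an
edge both `ω = 2` and `χ = 2` reduce to this equivalence.
-/

open SimpleGraph

section CliqueNumber

variable {V : Type*} {G : SimpleGraph V}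

lemma cliqueNumE_le_iff_cliqueFree {n : ℕ} : cliqueNumE G ≤ n ↔ G.CliqueFree (n + 1) := by
  constructor
  · intro h s hs
    have : ((n + 1 : ℕ) : ℕ∞) ≤ cliqueNumE G := le_biSup (fun m : ℕ => (m : ℕ∞)) ⟨s, hs⟩
    exact absurd (this.trans h) (by norm_cast; omega)
  · intro h
    refine iSup₂_le fun m ⟨s, hs⟩ => ?_
    by_contra! hlt
    exact h.mono (by exact_mod_cast Order.add_one_le_of_lt hlt) s hs

lemma cliqueNumE_eq_two_iff : cliqueNumE G = 2 ↔ G.CliqueFree 3 ∧ G ≠ ⊥ := by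
  have h2 := cliqueNumE_le_iff_cliqueFree (G := G) (n := 2)
  have h1 := cliqueNumE_le_iff_cliqueFree (G := G) (n := 1)
  rw [Nat.cast_ofNat] at h2
  rw [Nat.cast_one, cliqueFree_two] at h1
  rw [← h2, ne_eq, ← h1, not_le, le_antisymm_iff, ← ENat.add_one_le_iff ENat.one_ne_top,
    one_add_one_eq_two]

lemma SimpleGraph.colorable_two_of_forall_adj_not_iff (p : V → Prop)
    (h : ∀ v w, G.Adj v w → ¬(p v ↔ p w)) : G.Colorable 2 :=
  IsBipartiteWith.isBipartite (s := {v | p v}) (t := {v | ¬p v})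
    ⟨Set.disjoint_left.mpr fun _ hv hv' => hv' hv, fun v w hvw => by have := h v w hvw; tauto⟩

end CliqueNumber

section ZariskiGraph

variable {R : Type*} [CommRing R] {M : Type*} [AddCommGroup M] [Module R M]

lemma colonTop_eq_top_iff {N : Submodule R M} : colonTop R N = ⊤ ↔ N = ⊤ := by
  rw [colonTop, colon_eq_top_iff_subset, Set.top_eq_univ, Set.univ_subset_iff, coe_eq_univ]

lemma IsPrimeSubmodule.isPrime_colonTop {P : Submodule R M} (hP : IsPrimeSubmodule P) :
    (colonTop R P).IsPrime := by
  refine ⟨mt colonTop_eq_top_iff.mp hP.1, fun {a b} hab => or_iff_not_imp_right.mpr fun hb => ?_⟩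
  obtain ⟨m, -, hm⟩ : ∃ m ∈ (⊤ : Set M), b • m ∉ P := by
    simpa [colonTop, mem_colon] using hb
  have habm : a • b • m ∈ P := by
    rw [← mul_smul]
    exact mem_colon.mp hab m trivial
  exact (hP.2 a _ habm).resolve_right hm

lemma vset_top : Vset (⊤ : Submodule R M) = ∅ := by
  refine Set.eq_empty_of_forall_notMem fun P ⟨hP, hle⟩ => hP.1 ?_
  rw [← colonTop_eq_top_iff, ← top_le_iff]
  exact ((colonTop_eq_top_iff (N := (⊤ : Submodule R M))).mpr rfl).ge.trans hle

lemma colonTop_smul_top_le_iff {I : Ideal R} {P : Submodule R M} :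
    colonTop R (I • (⊤ : Submodule R M)) ≤ colonTop R P ↔ I ≤ colonTop R P :=
  ⟨le_trans fun _ hr => mem_colon.mpr fun _ _ => smul_mem_smul hr mem_top,
    fun h => colon_mono (smul_le.mpr fun _ hr m _ => mem_colon.mp (h hr) m trivial) le_rfl⟩

lemma vset_prodSub (N K : Submodule R M) : Vset (prodSub N K) = Vset N ∪ Vset K := by
  ext P
  simp only [Vset, prodSub, Set.mem_ofPred_eq, Set.mem_union, colonTop_smul_top_le_iff]
  constructor
  · rintro ⟨hP, hle⟩
    exact (hP.isPrime_colonTop.mul_le.mp hle).imp (⟨hP, ·⟩) (⟨hP, ·⟩)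
  · rintro (⟨hP, h⟩ | ⟨hP, h⟩)
    · exact ⟨hP, Ideal.mul_le_left.trans h⟩
    · exact ⟨hP, Ideal.mul_le_right.trans h⟩

variable {T : Set (Submodule R M)} {N L : Submodule R M}

lemma zAdj_iff : ZAdj T N L ↔ Vset N ∪ Vset L = T ∧ Vset N ≠ T ∧ Vset L ≠ T := by
  refine ⟨fun ⟨_, _, _, h⟩ => h, fun ⟨hNL, hN, hL⟩ => ⟨?_, ?_, ?_, hNL, hN, hL⟩⟩
  · rintro rfl
    exact hN (by rwa [Set.union_self] at hNL)
  · rintro rfl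
    exact hL (by rwa [vset_top, Set.empty_union] at hNL)
  · rintro rfl
    exact hN (by rwa [vset_top, Set.union_empty] at hNL)

lemma ZAdj.symm (h : ZAdj T N L) : ZAdj T L N := by
  rw [zAdj_iff] at h ⊢
  exact ⟨Set.union_comm _ _ ▸ h.1, h.2.2, h.2.1⟩

lemma ZAdj.vset_subset (h : ZAdj T N L) : Vset N ⊆ T :=
  h.2.2.2.1 ▸ Set.subset_union_left

lemma not_cliqueFree_three_of_zAdj {K : Submodule R M}
    (hNL : ZAdj T N L) (hNK : ZAdj T N K) (hLK : ZAdj T L K) : ¬(ZGraph T).CliqueFree 3 :=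
  fun h => h _ (is3Clique_triple_iff (G := ZGraph T) (a := ⟨N, L, hNL⟩) (b := ⟨L, K, hLK⟩)
    (c := ⟨K, N, hNK.symm⟩) |>.mpr ⟨hNL, hNK, hLK⟩)

lemma not_union_vset_eq_iff_of_cliqueFree_three (hG : (ZGraph T).CliqueFree 3)
    {A B S S' : Submodule R M} (hAB : ZAdj T A B) (hSS' : ZAdj T S S') :
    ¬(Vset S ∪ Vset B = T ↔ Vset S' ∪ Vset B = T) := by
  have sA := hAB.vset_subset
  have sB := hAB.symm.vset_subset
  have sS := hSS'.vset_subset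
  have sS' := hSS'.symm.vset_subset
  obtain ⟨hA_SB, hS'_SB, hSB_S'B, hSB_S'A, hS'B_S'A⟩ :
      Vset A ∪ (Vset S ∪ Vset B) = T ∧ Vset S' ∪ (Vset S ∪ Vset B) = T ∧
      Vset S ∪ Vset B ∪ (Vset S' ∪ Vset B) = T ∧ Vset S ∪ Vset B ∪ (Vset S' ∪ Vset A) = T ∧
      Vset S' ∪ Vset B ∪ (Vset S' ∪ Vset A) = T := by
    have eAB := (zAdj_iff.mp hAB).1
    have eSS' := (zAdj_iff.mp hSS').1
    clear hAB hSS' hG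
    refine ⟨?_, ?_, ?_, ?_, ?_⟩ <;> tauto_set
  obtain ⟨-, hA, hB⟩ := zAdj_iff.mp hAB
  obtain ⟨-, hS, hS'⟩ := zAdj_iff.mp hSS'
  intro hiff
  by_cases hSB : Vset S ∪ Vset B = T
  · exact not_cliqueFree_three_of_zAdj hSS'
      (zAdj_iff.mpr ⟨hSB, hS, hB⟩) (zAdj_iff.mpr ⟨hiff.mp hSB, hS', hB⟩) hG
  have hS'B := mt hiff.mpr hSB
  by_cases hS'A : Vset S' ∪ Vset A = T
  · refine not_cliqueFree_three_of_zAdj (N := A) (L := S') (K := prodSub S B) ?_ ?_ ?_ hG <;>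
      simp only [zAdj_iff, vset_prodSub]
    · exact ⟨Set.union_comm _ _ ▸ hS'A, hA, hS'⟩
    · exact ⟨hA_SB, hA, hSB⟩
    · exact ⟨hS'_SB, hS', hSB⟩
  · exact not_cliqueFree_three_of_zAdj (N := prodSub S B) (L := prodSub S' B)
      (K := prodSub S' A) (by simpa only [zAdj_iff, vset_prodSub] using ⟨hSB_S'B, hSB, hS'B⟩)
      (by simpa only [zAdj_iff, vset_prodSub] using ⟨hSB_S'A, hSB, hS'A⟩)
      (by simpa only [zAdj_iff, vset_prodSub] using ⟨hS'B_S'A, hS'B, hS'A⟩) hG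

theorem zGraph_colorable_two_of_cliqueFree_three (hG : (ZGraph T).CliqueFree 3) :
    (ZGraph T).Colorable 2 := by
  rcases isEmpty_or_nonempty {N // ZVertex T N} with _ | ⟨⟨A, B, hAB⟩⟩
  · exact .of_isEmpty 2
  exact colorable_two_of_forall_adj_not_iff (fun v => Vset v.1 ∪ Vset B = T) fun _ _ hSS' =>
    not_union_vset_eq_iff_of_cliqueFree_three hG hAB hSS'

end ZariskiGraph

theorem stmt11_general {R : Type*} [CommRing R] {M : Type*} [AddCommGroup M] [Module R M]
    (T : Set (Submodule R M)) :
    (cliqueNumE (ZGraph T) = 2 ↔ (ZGraph T).chromaticNumber = 2) ∧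
      ((ZGraph T).Colorable 2 ↔ (ZGraph T).CliqueFree 3) := by
  have hbip : (ZGraph T).Colorable 2 ↔ (ZGraph T).CliqueFree 3 :=
    ⟨fun h => h.cliqueFree (by norm_num), zGraph_colorable_two_of_cliqueFree_three⟩
  refine ⟨?_, hbip⟩
  rw [cliqueNumE_eq_two_iff, chromaticNumber_eq_two_iff, IsBipartite, hbip]

/-- `ω(G(τ_T)) = 2 ↔ χ(G(τ_T)) = 2`; equivalently, `G(τ_T)` is
bipartite iff it is triangle-free. -/
theorem stmt11 {R : Type*} [CommRing R] {M : Type*} [AddCommGroup M] [Module R M]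
    (T : Set (Submodule R M)) (hT : T.Nonempty) :
    (cliqueNumE (ZGraph T) = 2 ↔ (ZGraph T).chromaticNumber = 2) ∧
      ((ZGraph T).Colorable 2 ↔ (ZGraph T).CliqueFree 3) :=
  stmt11_general T
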